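/- arXiv:1601.06826 — 5 statements merged into one kernel-verified Lean document; each statement's English description precedes it below -/
import Mathlib

section
/- Let ρ and σ be density matrices (positive semidefinite, unit trace) with the support of ρ contained in the support of σ. Then for any c > 0, the quantum relative entropy satisfies D(ρ‖σ) ≤ (1/c)·(Tr(ρ^{1+c} σ^{-c}) − 1), where σ^{-c} is taken on the support of σ. -/
/-!
Diagonalise `ρ = ∑ pᵢ |uᵢ⟩⟨uᵢ|` and `σ = ∑ qⱼ |vⱼ⟩⟨vⱼ|` and put `wᵢⱼ = |⟨uᵢ, vⱼ⟩|²`, whose rows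
sum to `1`. Then `D(ρ‖σ) = ∑ wᵢⱼ pᵢ (log pᵢ - log qⱼ)`,
`Tr(ρ^{1+c} σ^{-c}) = ∑ wᵢⱼ pᵢ^{1+c} qⱼ^{-c}` and `1 = Tr ρ = ∑ wᵢⱼ pᵢ`, so the theorem follows
term by term from `c log t ≤ t^c - 1` at `t = pᵢ / qⱼ`. The support condition makes `wᵢⱼ = 0`
whenever `qⱼ = 0 < pᵢ`, the only terms where the support conventions of `logm` and `powm` would
break the termwise bound.
-/

open Matrix
open scoped ComplexOrder

variable {d : Type*} [Fintype d] [DecidableEq d]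

open Classical in
/-- Functional calculus for Hermitian matrices: apply `f` to the eigenvalues.
Returns `0` if the matrix is not Hermitian. -/
noncomputable def mfun (f : ℝ → ℝ) (A : Matrix d d ℂ) : Matrix d d ℂ :=
  if hA : A.IsHermitian then
    (hA.eigenvectorUnitary : Matrix d d ℂ) *
      Matrix.diagonal (fun i => (f (hA.eigenvalues i) : ℂ)) *
      star (hA.eigenvectorUnitary : Matrix d d ℂ)
  else 0

/-- Matrix logarithm on the support (eigenvalues `≤ 0` are mapped to `0`). -/
noncomputable def logm (A : Matrix d d ℂ) : Matrix d d ℂ :=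
  mfun (fun x => if x ≤ 0 then 0 else Real.log x) A

/-- Matrix real power on the support (eigenvalues `≤ 0` are mapped to `0`). -/
noncomputable def powm (A : Matrix d d ℂ) (p : ℝ) : Matrix d d ℂ :=
  mfun (fun x => if x ≤ 0 then 0 else x ^ p) A

/-- Quantum relative entropy `D(ρ‖σ) = Tr(ρ (log ρ − log σ))` (natural log). -/
noncomputable def qRelEnt (ρ σ : Matrix d d ℂ) : ℝ :=
  ((ρ * (logm ρ - logm σ)).trace).re

/-- The support of `ρ` is contained in the support of `σ` (kernel containment,
equivalent to range containment for Hermitian matrices). -/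
def SuppSubset (ρ σ : Matrix d d ℂ) : Prop :=
  ∀ v : d → ℂ, σ.mulVec v = 0 → ρ.mulVec v = 0

/-- Trace norm of a Hermitian matrix: `Tr |A|`. -/
noncomputable def traceNorm (A : Matrix d d ℂ) : ℝ :=
  ((mfun (fun x => |x|) A).trace).re

namespace Real

lemma mul_log_sub_log_le {p q c : ℝ} (hp : 0 < p) (hq : 0 < q) (hc : 0 < c) :
    p * (log p - log q) ≤ (p ^ (1 + c) * q ^ (-c) - p) / c := by
  have ht : 0 < p / q := div_pos hp hq
  have hlog : c * log (p / q) ≤ (p / q) ^ c - 1 := by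
    rw [← log_rpow ht]
    exact log_le_sub_one_of_pos (rpow_pos_of_pos ht c)
  have hpow : p ^ (1 + c) * q ^ (-c) = p * (p / q) ^ c := by
    rw [rpow_add hp, rpow_one, rpow_neg hq.le, div_rpow hp.le hq.le]
    ring
  rw [le_div_iff₀ hc, hpow, ← log_div hp.ne' hq.ne']
  nlinarith [mul_le_mul_of_nonneg_left hlog hp.le]

end Real

noncomputable def suppLog (x : ℝ) : ℝ := if x ≤ 0 then 0 else Real.log x

noncomputable def suppRpow (x p : ℝ) : ℝ := if x ≤ 0 then 0 else x ^ p

lemma logm_eq_mfun_suppLog (A : Matrix d d ℂ) : logm A = mfun suppLog A := rfl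

lemma powm_eq_mfun_suppRpow (A : Matrix d d ℂ) (p : ℝ) : powm A p = mfun (suppRpow · p) A := rfl

lemma mul_suppLog_sub_suppLog_le {p q c : ℝ} (hp : 0 ≤ p) (hq : 0 ≤ q) (hc : 0 < c)
    (hpq : q = 0 → p = 0) :
    p * (suppLog p - suppLog q) ≤ (suppRpow p (1 + c) * suppRpow q (-c) - p) / c := by
  rcases hp.eq_or_lt with rfl | hp
  · simp [suppRpow]
  have hq : 0 < q := hq.lt_of_ne fun h => hp.ne' (hpq h.symm)
  simpa [suppLog, suppRpow, hp.not_ge, hq.not_ge] using Real.mul_log_sub_log_le hp hq hc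

lemma Matrix.trace_diagonal_mul_diagonal_mul_star {α : Type*} [CommSemiring α] [StarRing α]
    (a b : d → α) (M : Matrix d d α) :
    (diagonal a * M * diagonal b * star M).trace
      = ∑ i, ∑ j, a i * b j * (M i j * star (M i j)) := by
  have hentry : ∀ i j, (diagonal a * M * diagonal b) i j = a i * M i j * b j := fun i j => by
    rw [mul_diagonal, diagonal_mul]
  simp only [trace, diag, mul_apply, hentry, star_eq_conjTranspose, conjTranspose_apply]
  exact Finset.sum_congr rfl fun i _ => Finset.sum_congr rfl fun j _ => by ring

section FunctionalCalculus

variable {A : Matrix d d ℂ}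

lemma mfun_of_isHermitian (f : ℝ → ℝ) (hA : A.IsHermitian) :
    mfun f A = (hA.eigenvectorUnitary : Matrix d d ℂ) *
      diagonal (fun i => (f (hA.eigenvalues i) : ℂ)) *
      star (hA.eigenvectorUnitary : Matrix d d ℂ) := by
  rw [mfun, dif_pos hA]

lemma mfun_id (hA : A.IsHermitian) : mfun id A = A := by
  rw [mfun_of_isHermitian _ hA]
  conv_rhs => rw [hA.spectral_theorem]
  rfl

lemma mfun_mul_mfun (f g : ℝ → ℝ) (hA : A.IsHermitian) :
    mfun f A * mfun g A = mfun (f * g) A := by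
  set U := (hA.eigenvectorUnitary : Matrix d d ℂ)
  have hU : star U * U = 1 := Unitary.coe_star_mul_self _
  simp only [mfun_of_isHermitian _ hA, Matrix.mul_assoc]
  rw [← Matrix.mul_assoc (star U) U, hU, Matrix.one_mul, ← Matrix.mul_assoc (diagonal _),
    diagonal_mul_diagonal]
  simp

lemma trace_mfun (f : ℝ → ℝ) (hA : A.IsHermitian) :
    (mfun f A).trace = ((∑ i, f (hA.eigenvalues i) : ℝ) : ℂ) := by
  rw [mfun_of_isHermitian _ hA, trace_mul_cycle, Unitary.coe_star_mul_self, Matrix.one_mul,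
    trace_diagonal]
  push_cast
  rfl

end FunctionalCalculus

lemma Matrix.IsHermitian.star_eigenvectorUnitary_mul {𝕜 : Type*} [RCLike 𝕜] {A : Matrix d d 𝕜}
    (hA : A.IsHermitian) :
    star (hA.eigenvectorUnitary : Matrix d d 𝕜) * A
      = diagonal (RCLike.ofReal ∘ hA.eigenvalues) *
        star (hA.eigenvectorUnitary : Matrix d d 𝕜) := by
  conv_lhs => arg 2; rw [hA.spectral_theorem, Unitary.conjStarAlgAut_apply]
  rw [← Matrix.mul_assoc, ← Matrix.mul_assoc, Unitary.coe_star_mul_self, Matrix.one_mul]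

section Overlap

variable {A B : Matrix d d ℂ}

/-- `|⟨uᵢ, vⱼ⟩|²` for the eigenvector bases `u` of `A` and `v` of `B`. -/
noncomputable def eigenOverlap (hA : A.IsHermitian) (hB : B.IsHermitian) (i j : d) : ℝ :=
  Complex.normSq ((star (hA.eigenvectorUnitary : Matrix d d ℂ) * hB.eigenvectorUnitary) i j)

lemma eigenOverlap_nonneg (hA : A.IsHermitian) (hB : B.IsHermitian) (i j : d) :
    0 ≤ eigenOverlap hA hB i j :=
  Complex.normSq_nonneg _

lemma sum_eigenOverlap_right (hA : A.IsHermitian) (hB : B.IsHermitian) (i : d) :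
    ∑ j, eigenOverlap hA hB i j = 1 := by
  set U := (hA.eigenvectorUnitary : Matrix d d ℂ)
  set V := (hB.eigenvectorUnitary : Matrix d d ℂ)
  have hU : star U * U = 1 := Unitary.coe_star_mul_self _
  have hV : V * star V = 1 := Unitary.coe_mul_star_self _
  have hM : star U * V * star (star U * V) = 1 := by
    rw [star_mul, star_star, Matrix.mul_assoc, ← Matrix.mul_assoc V, hV, Matrix.one_mul, hU]
  have hii := congrFun (congrFun hM i) i
  rw [mul_apply, one_apply_eq] at hii
  simp only [star_apply, RCLike.star_def, Complex.mul_conj] at hii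
  exact_mod_cast hii

lemma trace_mfun_mul_mfun (f g : ℝ → ℝ) (hA : A.IsHermitian) (hB : B.IsHermitian) :
    (mfun f A * mfun g B).trace
      = ((∑ i, ∑ j, f (hA.eigenvalues i) * g (hB.eigenvalues j) * eigenOverlap hA hB i j : ℝ)
          : ℂ) := by
  set U := (hA.eigenvectorUnitary : Matrix d d ℂ) with hUdef
  set V := (hB.eigenvectorUnitary : Matrix d d ℂ) with hVdef
  have hU : star U * U = 1 := Unitary.coe_star_mul_self _
  have hU' : U * star U = 1 := Unitary.coe_mul_star_self _
  have hconj : mfun f A * mfun g B = U * (diagonal (fun i => (f (hA.eigenvalues i) : ℂ)) *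
      (star U * V) * diagonal (fun j => (g (hB.eigenvalues j) : ℂ)) * star (star U * V)) *
      star U := by
    simp only [mfun_of_isHermitian _ hA, mfun_of_isHermitian _ hB, ← hUdef, ← hVdef, star_mul,
      star_star, Matrix.mul_assoc, hU', Matrix.mul_one]
  rw [hconj, trace_mul_cycle, ← Matrix.mul_assoc, hU, Matrix.one_mul,
    trace_diagonal_mul_diagonal_mul_star]
  push_cast
  simp only [RCLike.star_def, Complex.mul_conj]
  rfl

/-- An eigenvector of `B` in its kernel lies in the kernel of `A`, so it is orthogonal to every
eigenvector of `A` with nonzero eigenvalue. -/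
lemma eigenvalues_mul_eigenOverlap_eq_zero (hA : A.IsHermitian) (hB : B.IsHermitian)
    (hAB : SuppSubset A B) {i j : d} (hj : hB.eigenvalues j = 0) :
    hA.eigenvalues i * eigenOverlap hA hB i j = 0 := by
  have hAv : A *ᵥ hB.eigenvectorBasis j = 0 :=
    hAB _ (by rw [hB.mulVec_eigenvectorBasis, hj, zero_smul])
  have hentry : (diagonal (RCLike.ofReal ∘ hA.eigenvalues : d → ℂ) *
      (star (hA.eigenvectorUnitary : Matrix d d ℂ) * (hB.eigenvectorUnitary : Matrix d d ℂ))) i j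
        = 0 := by
    rw [← Matrix.mul_assoc, ← hA.star_eigenvectorUnitary_mul]
    change ((star (hA.eigenvectorUnitary : Matrix d d ℂ) * A) *ᵥ hB.eigenvectorBasis j) i = 0
    rw [← mulVec_mulVec, hAv, mulVec_zero, Pi.zero_apply]
  rw [diagonal_mul, Function.comp_apply, mul_eq_zero, RCLike.ofReal_eq_zero] at hentry
  rcases hentry with h | h
  · rw [h, zero_mul]
  · rw [eigenOverlap, h, map_zero, mul_zero]

end Overlap

section Representation

variable {ρ σ : Matrix d d ℂ}

lemma sum_eigenvalues_mul_eigenOverlap (hρ : ρ.IsHermitian) (hσ : σ.IsHermitian) :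
    ((∑ i, ∑ j, hρ.eigenvalues i * eigenOverlap hρ hσ i j : ℝ) : ℂ) = ρ.trace := by
  simp only [← Finset.mul_sum, sum_eigenOverlap_right, mul_one, hρ.trace_eq_sum_eigenvalues]
  push_cast
  rfl

lemma qRelEnt_eq_sum (hρ : ρ.IsHermitian) (hσ : σ.IsHermitian) :
    qRelEnt ρ σ = ∑ i, ∑ j, hρ.eigenvalues i *
      (suppLog (hρ.eigenvalues i) - suppLog (hσ.eigenvalues j)) * eigenOverlap hρ hσ i j := by
  have hself : ρ * logm ρ = mfun (id * suppLog) ρ := by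
    rw [← mfun_mul_mfun _ _ hρ, mfun_id hρ, logm_eq_mfun_suppLog]
  have hcross : ρ * logm σ = mfun id ρ * mfun suppLog σ := by
    rw [mfun_id hρ, logm_eq_mfun_suppLog]
  rw [qRelEnt, Matrix.mul_sub, trace_sub, hself, hcross, trace_mfun _ hρ,
    trace_mfun_mul_mfun _ _ hρ hσ, Complex.sub_re, Complex.ofReal_re, Complex.ofReal_re]
  simp only [Pi.mul_apply, id, mul_sub, sub_mul, Finset.sum_sub_distrib, ← Finset.mul_sum,
    sum_eigenOverlap_right, mul_one]

end Representation

lemma eigenvalues_mul_suppLog_sub_mul_eigenOverlap_le {ρ σ : Matrix d d ℂ} (hρ : ρ.PosSemidef)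
    (hσ : σ.PosSemidef) (hsupp : SuppSubset ρ σ) {c : ℝ} (hc : 0 < c) (i j : d) :
    hρ.1.eigenvalues i * (suppLog (hρ.1.eigenvalues i) - suppLog (hσ.1.eigenvalues j)) *
        eigenOverlap hρ.1 hσ.1 i j
      ≤ (suppRpow (hρ.1.eigenvalues i) (1 + c) * suppRpow (hσ.1.eigenvalues j) (-c)
          - hρ.1.eigenvalues i) / c * eigenOverlap hρ.1 hσ.1 i j := by
  rcases (eigenOverlap_nonneg hρ.1 hσ.1 i j).eq_or_lt with hw | hw
  · rw [← hw, mul_zero, mul_zero]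
  refine mul_le_mul_of_nonneg_right (mul_suppLog_sub_suppLog_le (hρ.eigenvalues_nonneg i)
    (hσ.eigenvalues_nonneg j) hc fun hq => ?_) hw.le
  exact (mul_eq_zero.mp (eigenvalues_mul_eigenOverlap_eq_zero hρ.1 hσ.1 hsupp hq)).resolve_right
    hw.ne'

theorem qRelEnt_le_ruskai_upper_general (ρ σ : Matrix d d ℂ)
    (hρ : ρ.PosSemidef) (hρ1 : ρ.trace = 1)
    (hσ : σ.PosSemidef)
    (hsupp : SuppSubset ρ σ) (c : ℝ) (hc : 0 < c) :
    qRelEnt ρ σ ≤ (1 / c) * (((powm ρ (1 + c) * powm σ (-c)).trace).re - 1) := by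
  set p := hρ.1.eigenvalues
  set q := hσ.1.eigenvalues
  set w := eigenOverlap hρ.1 hσ.1
  have htrace : ∑ i, ∑ j, p i * w i j = 1 := by
    exact_mod_cast (sum_eigenvalues_mul_eigenOverlap hρ.1 hσ.1).trans hρ1
  calc qRelEnt ρ σ = ∑ i, ∑ j, p i * (suppLog (p i) - suppLog (q j)) * w i j :=
        qRelEnt_eq_sum hρ.1 hσ.1
    _ ≤ ∑ i, ∑ j, (suppRpow (p i) (1 + c) * suppRpow (q j) (-c) - p i) / c * w i j :=
        Finset.sum_le_sum fun i _ => Finset.sum_le_sum fun j _ =>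
          eigenvalues_mul_suppLog_sub_mul_eigenOverlap_le hρ hσ hsupp hc i j
    _ = 1 / c * (∑ i, ∑ j, suppRpow (p i) (1 + c) * suppRpow (q j) (-c) * w i j
          - ∑ i, ∑ j, p i * w i j) := by
        simp only [Finset.mul_sum, ← Finset.sum_sub_distrib]
        exact Finset.sum_congr rfl fun i _ => Finset.sum_congr rfl fun j _ => by ring
    _ = 1 / c * (((powm ρ (1 + c) * powm σ (-c)).trace).re - 1) := by
        rw [powm_eq_mfun_suppRpow, powm_eq_mfun_suppRpow, trace_mfun_mul_mfun _ _ hρ.1 hσ.1,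
          Complex.ofReal_re, htrace]

/-- For density matrices `ρ`, `σ` with `supp(ρ) ⊆ supp(σ)` and any `c > 0`,
`D(ρ‖σ) ≤ (1/c)·(Tr(ρ^{1+c} σ^{-c}) − 1)`, where `σ^{-c}` is taken on the support of `σ`. -/
theorem qRelEnt_le_ruskai_upper (ρ σ : Matrix d d ℂ)
    (hρ : ρ.PosSemidef) (hρ1 : ρ.trace = 1)
    (hσ : σ.PosSemidef) (hσ1 : σ.trace = 1)
    (hsupp : SuppSubset ρ σ) (c : ℝ) (hc : 0 < c) :
    qRelEnt ρ σ ≤ (1 / c) * (((powm ρ (1 + c) * powm σ (-c)).trace).re - 1) :=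
  qRelEnt_le_ruskai_upper_general ρ σ hρ hρ1 hσ hsupp c hc
end

section
/- Let ρ₀ and ρ₁ be density matrices with supp(ρ₁) ⊆ supp(ρ₀), ρ₀ positive definite, and let 0 ≤ α ≤ 1. Define ρ_α = (1−α)ρ₀ + α ρ₁. Then D(ρ_α ‖ ρ₀) ≤ α² χ²(ρ₁‖ρ₀), where χ²(ρ₁‖ρ₀) = Tr((ρ₁−ρ₀)² ρ₀^{-1}). -/
open Matrix
open scoped ComplexOrder

variable {d : Type*} [Fintype d] [DecidableEq d]

/-! Put `A = ρ_α`, `B = ρ₀` and let `aᵢ, bⱼ` be their eigenvalues, with eigenvectors `uᵢ, vⱼ`.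
For functions `f, g` of the two matrices, `Tr (f(A) g(B)) = ∑ᵢⱼ f(aᵢ) g(bⱼ) |⟨uᵢ, vⱼ⟩|²`, so
`D(A‖B)` and `Tr(A² B⁻¹) - Tr A` are both such double sums, and they compare termwise by
`a (log a - log b) ≤ a (a / b - 1)`, i.e. `log x ≤ x - 1`. When `Tr A = Tr B` the right-hand side
is `χ²(A‖B)`, and `A - B = α (ρ₁ - ρ₀)` turns `χ²(ρ_α‖ρ₀)` into `α² χ²(ρ₁‖ρ₀)`. -/

lemma continuousOn_spectrum_real {𝕜 n : Type*} [RCLike 𝕜] [Fintype n] [DecidableEq n]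
    (f : ℝ → ℝ) (A : Matrix n n 𝕜) : ContinuousOn f (spectrum ℝ A) :=
  A.finite_real_spectrum.continuousOn f

section FunctionalCalculus

variable {A B : Matrix d d ℂ}

lemma mfun_eq_cfc (hA : A.IsHermitian) (f : ℝ → ℝ) : mfun f A = cfc f A := by
  rw [mfun, dif_pos hA, hA.cfc_eq, IsHermitian.cfc, Unitary.conjStarAlgAut_apply]
  rfl

lemma logm_eq_cfc_log (hA : A.PosSemidef) : logm A = cfc Real.log A := by
  rw [logm, mfun_eq_cfc hA.1]
  refine cfc_congr fun x hx => ?_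
  obtain ⟨i, rfl⟩ := hA.1.spectrum_real_eq_range_eigenvalues ▸ hx
  rcases (hA.eigenvalues_nonneg i).eq_or_lt with h | h
  · simp [← h]
  · simp [h.not_ge]

lemma trace_diagonal_mul_mul_diagonal_mul_star (f g : d → ℂ) (W : Matrix d d ℂ) :
    (diagonal f * W * diagonal g * star W).trace =
      ∑ i, ∑ j, f i * g j * Complex.normSq (W i j) := by
  refine Finset.sum_congr rfl fun i _ => ?_
  rw [diag_apply, mul_apply]
  refine Finset.sum_congr rfl fun j _ => ?_
  rw [mul_diagonal, diagonal_mul, star_apply, Complex.normSq_eq_conj_mul_self, Complex.star_def]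
  ring

lemma trace_cfc_mul_cfc (hA : A.IsHermitian) (hB : B.IsHermitian) (f g : ℝ → ℝ) :
    (cfc f A * cfc g B).trace =
      ∑ i, ∑ j, f (hA.eigenvalues i) * g (hB.eigenvalues j) * eigenOverlap hA hB i j := by
  rw [hA.cfc_eq, hB.cfc_eq, IsHermitian.cfc, IsHermitian.cfc, Unitary.conjStarAlgAut_apply,
    Unitary.conjStarAlgAut_apply]
  set U := (hA.eigenvectorUnitary : Matrix d d ℂ)
  set V := (hB.eigenvectorUnitary : Matrix d d ℂ)
  have hdiag := trace_diagonal_mul_mul_diagonal_mul_star (RCLike.ofReal ∘ f ∘ hA.eigenvalues)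
    (RCLike.ofReal ∘ g ∘ hB.eigenvalues) (star U * V)
  simp only [star_mul, star_star, Matrix.mul_assoc] at hdiag ⊢
  rw [trace_mul_comm U]
  simp only [Matrix.mul_assoc]
  rw [hdiag]
  simp [eigenOverlap, U, V]

end FunctionalCalculus

lemma mul_log_sub_mul_log_le {x y : ℝ} (hx : 0 ≤ x) (hy : 0 < y) :
    x * Real.log x - x * Real.log y ≤ x * x / y - x := by
  rcases hx.eq_or_lt with rfl | hx
  · simp
  calc x * Real.log x - x * Real.log y = x * Real.log (x / y) := by
        rw [Real.log_div hx.ne' hy.ne', mul_sub]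
    _ ≤ x * (x / y - 1) := by gcongr; exact Real.log_le_sub_one_of_pos (div_pos hx hy)
    _ = x * x / y - x := by ring

section RelativeEntropy

variable {A B : Matrix d d ℂ}

theorem qRelEnt_le_re_trace_mul_mul_inv_sub_re_trace (hA : A.PosSemidef) (hB : B.PosDef) :
    qRelEnt A B ≤ (A * A * B⁻¹).trace.re - A.trace.re := by
  have hAsa : IsSelfAdjoint A := hA.1.isSelfAdjoint
  have hBsa : IsSelfAdjoint B := hB.1.isSelfAdjoint
  have hAlogA : A * cfc Real.log A =
      cfc (fun x => x * Real.log x) A * cfc (fun _ : ℝ => (1 : ℝ)) B := by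
    rw [cfc_const_one ℝ B, mul_one, cfc_mul (fun x => x) Real.log A
      (continuousOn_spectrum_real _ A) (continuousOn_spectrum_real _ A), cfc_id' ℝ A]
  have hAlogB : A * cfc Real.log B = cfc (fun x : ℝ => x) A * cfc Real.log B := by
    rw [cfc_id' ℝ A]
  have hAAB : A * A * B⁻¹ = cfc (fun x : ℝ => x * x) A * cfc (fun x : ℝ => x⁻¹) B := by
    rw [nonsing_inv_eq_ringInverse, cfc_ringInverse_id (a := B) hB.isUnit,
      cfc_mul (fun x => x) (fun x => x) A (continuousOn_spectrum_real _ A)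
        (continuousOn_spectrum_real _ A), cfc_id' ℝ A]
  have htrA : A.trace = (cfc (fun x : ℝ => x) A * cfc (fun _ : ℝ => (1 : ℝ)) B).trace := by
    rw [cfc_id' ℝ A, cfc_const_one ℝ B, mul_one]
  rw [qRelEnt, logm_eq_cfc_log hA, logm_eq_cfc_log hB.posSemidef, mul_sub, trace_sub, hAlogA,
    hAlogB, hAAB, htrA]
  simp only [trace_cfc_mul_cfc hA.1 hB.1, Complex.sub_re, Complex.ofReal_re,
    ← Finset.sum_sub_distrib, ← sub_mul]
  refine Finset.sum_le_sum fun i _ => Finset.sum_le_sum fun j _ =>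
    mul_le_mul_of_nonneg_right ?_ (Complex.normSq_nonneg _)
  simpa [div_eq_mul_inv] using
    mul_log_sub_mul_log_le (hA.eigenvalues_nonneg i) (hB.eigenvalues_pos j)

noncomputable def chiSq (A B : Matrix d d ℂ) : ℝ :=
  ((A - B) * (A - B) * B⁻¹).trace.re

lemma chiSq_eq_of_trace_eq (hB : IsUnit B.det) (htr : A.trace = B.trace) :
    chiSq A B = (A * A * B⁻¹).trace.re - A.trace.re := by
  have hexp : (A - B) * (A - B) * B⁻¹ =
      A * A * B⁻¹ - A * (B * B⁻¹) - B * A * B⁻¹ + B * (B * B⁻¹) := by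
    noncomm_ring
  have hconj : (B * A * B⁻¹).trace = A.trace := by
    rw [trace_mul_cycle, nonsing_inv_mul _ hB, Matrix.one_mul]
  rw [chiSq, hexp, mul_nonsing_inv _ hB, Matrix.mul_one, Matrix.mul_one, trace_add, trace_sub,
    trace_sub, hconj, ← htr]
  simp only [Complex.add_re, Complex.sub_re]
  ring

theorem qRelEnt_le_chiSq_s5 (hA : A.PosSemidef) (hB : B.PosDef) (htr : A.trace = B.trace) :
    qRelEnt A B ≤ chiSq A B :=
  chiSq_eq_of_trace_eq hB.det_pos.ne'.isUnit htr ▸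
    qRelEnt_le_re_trace_mul_mul_inv_sub_re_trace hA hB

lemma chiSq_one_sub_smul_add_smul (A B : Matrix d d ℂ) (α : ℝ) :
    chiSq ((1 - α) • B + α • A) B = α ^ 2 * chiSq A B := by
  have hdiff : (1 - α) • B + α • A - B = α • (A - B) := by module
  rw [chiSq, chiSq, hdiff, smul_mul_assoc, mul_smul_comm, smul_smul, smul_mul_assoc, trace_smul,
    Complex.real_smul, Complex.re_ofReal_mul, sq]

end RelativeEntropy

theorem qRelEnt_mix_le_sq_mul_chiSq_general (ρ₀ ρ₁ : Matrix d d ℂ)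
    (h₀ : ρ₀.PosDef) (h₀1 : ρ₀.trace = 1)
    (h₁ : ρ₁.PosSemidef) (h₁1 : ρ₁.trace = 1)
    (α : ℝ) (hα0 : 0 ≤ α) (hα1 : α ≤ 1) :
    qRelEnt ((1 - α) • ρ₀ + α • ρ₁) ρ₀ ≤
      α ^ 2 * (((ρ₁ - ρ₀) * (ρ₁ - ρ₀) * ρ₀⁻¹).trace).re := by
  have hmix : ((1 - α) • ρ₀ + α • ρ₁).PosSemidef :=
    (h₀.posSemidef.smul (sub_nonneg.2 hα1)).add (h₁.smul hα0)
  have htr : ((1 - α) • ρ₀ + α • ρ₁).trace = ρ₀.trace := by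
    rw [trace_add, trace_smul, trace_smul, h₀1, h₁1]
    simp
  calc qRelEnt ((1 - α) • ρ₀ + α • ρ₁) ρ₀ ≤ chiSq ((1 - α) • ρ₀ + α • ρ₁) ρ₀ :=
        qRelEnt_le_chiSq_s5 hmix h₀ htr
    _ = α ^ 2 * chiSq ρ₁ ρ₀ := chiSq_one_sub_smul_add_smul ρ₁ ρ₀ α

/-- For density matrices `ρ₀` (positive definite) and `ρ₁` with
`supp(ρ₁) ⊆ supp(ρ₀)`, and `0 ≤ α ≤ 1`, with `ρ_α = (1−α)ρ₀ + αρ₁`,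
`D(ρ_α‖ρ₀) ≤ α² χ²(ρ₁‖ρ₀)` where `χ²(ρ₁‖ρ₀) = Tr((ρ₁−ρ₀)² ρ₀⁻¹)`. -/
theorem qRelEnt_mix_le_sq_mul_chiSq (ρ₀ ρ₁ : Matrix d d ℂ)
    (h₀ : ρ₀.PosDef) (h₀1 : ρ₀.trace = 1)
    (h₁ : ρ₁.PosSemidef) (h₁1 : ρ₁.trace = 1)
    (hsupp : SuppSubset ρ₁ ρ₀) (α : ℝ) (hα0 : 0 ≤ α) (hα1 : α ≤ 1) :
    qRelEnt ((1 - α) • ρ₀ + α • ρ₁) ρ₀ ≤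
      α ^ 2 * (((ρ₁ - ρ₀) * (ρ₁ - ρ₀) * ρ₀⁻¹).trace).re :=
  qRelEnt_mix_le_sq_mul_chiSq_general ρ₀ ρ₁ h₀ h₀1 h₁ h₁1 α hα0 hα1
end

section
/- For density matrices A and B on a finite-dimensional Hilbert space with B positive definite, D(A‖B) ≤ Tr((A − B)² B^{-1}) = χ²(A‖B). -/
open Matrix
open scoped ComplexOrder

variable {d : Type*} [Fintype d] [DecidableEq d]

/-!
Diagonalise `A = ∑ aᵢ |uᵢ⟩⟨uᵢ|` and `B = ∑ bⱼ |vⱼ⟩⟨vⱼ|` and put `wᵢⱼ = |⟨uᵢ, vⱼ⟩|² ≥ 0`.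
Every trace `Tr (f(A) g(B))` equals `∑ᵢⱼ f(aᵢ) g(bⱼ) wᵢⱼ`, so `D(A‖B) ≤ Tr (A² B⁻¹) - Tr A` follows
term by term from `a (log a - log b) ≤ a² / b - a`, which is `log t ≤ t - 1` at `t = a / b`.
Expanding `(A - B)² B⁻¹` and using `Tr A = Tr B` turns the right-hand side into `χ²(A‖B)`.
-/

namespace Matrix

variable {𝕜 : Type*} [RCLike 𝕜]

lemma trace_conj_diagonal_mul_conj_diagonal (U V : Matrix d d 𝕜) (a b : d → 𝕜) :
    (U * diagonal a * star U * (V * diagonal b * star V)).trace =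
      ∑ i, ∑ j, a i * b j * (‖(star U * V) i j‖ ^ 2 : ℝ) := by
  have hcycle : (U * diagonal a * star U * (V * diagonal b * star V)).trace =
      (diagonal a * ((star U * V) * diagonal b * star (star U * V))).trace := by
    rw [Matrix.mul_assoc, Matrix.mul_assoc, trace_mul_comm]
    simp only [star_mul, star_star, Matrix.mul_assoc]
  rw [hcycle, trace]
  refine Finset.sum_congr rfl fun i _ => ?_
  rw [diag_apply, diagonal_mul, mul_apply, Finset.mul_sum]
  refine Finset.sum_congr rfl fun j _ => ?_
  rw [mul_diagonal, star_apply, RCLike.ofReal_pow, ← RCLike.mul_conj, RCLike.star_def]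
  ring

namespace IsHermitian

variable {A B : Matrix d d 𝕜}

noncomputable def eigenOverlap (hA : A.IsHermitian) (hB : B.IsHermitian) (i j : d) : ℝ :=
  ‖(star (hA.eigenvectorUnitary : Matrix d d 𝕜) * hB.eigenvectorUnitary) i j‖ ^ 2

lemma eigenOverlap_nonneg (hA : A.IsHermitian) (hB : B.IsHermitian) (i j : d) :
    0 ≤ hA.eigenOverlap hB i j :=
  sq_nonneg _

lemma trace_cfc_mul_cfc (hA : A.IsHermitian) (hB : B.IsHermitian) (f g : ℝ → ℝ) :
    (cfc f A * cfc g B).trace =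
      ((∑ i, ∑ j, f (hA.eigenvalues i) * g (hB.eigenvalues j) * hA.eigenOverlap hB i j : ℝ) :
        𝕜) := by
  rw [hA.cfc_eq, hB.cfc_eq, IsHermitian.cfc, IsHermitian.cfc, Unitary.conjStarAlgAut_apply,
    Unitary.conjStarAlgAut_apply, trace_conj_diagonal_mul_conj_diagonal]
  simp [eigenOverlap]

end IsHermitian

lemma IsHermitian.mfun_eq_cfc {A : Matrix d d ℂ} (hA : A.IsHermitian) (f : ℝ → ℝ) :
    mfun f A = cfc f A := by
  rw [mfun, dif_pos hA, hA.cfc_eq, IsHermitian.cfc, Unitary.conjStarAlgAut_apply]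
  rfl

lemma PosSemidef.logm_eq_cfc_log {A : Matrix d d ℂ} (hA : A.PosSemidef) :
    logm A = cfc Real.log A := by
  rw [logm, hA.isHermitian.mfun_eq_cfc]
  refine cfc_congr fun x hx => ?_
  rw [hA.isHermitian.spectrum_real_eq_range_eigenvalues] at hx
  obtain ⟨i, rfl⟩ := hx
  split_ifs with h
  · rw [le_antisymm h (hA.eigenvalues_nonneg i), Real.log_zero]
  · rfl

lemma PosDef.inv_eq_cfc_inv {A : Matrix d d 𝕜} (hA : A.PosDef) :
    A⁻¹ = cfc (·⁻¹ : ℝ → ℝ) A := by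
  rw [nonsing_inv_eq_ringInverse]
  exact (cfc_ringInverse_id A hA.isUnit hA.isHermitian).symm

lemma trace_sub_mul_sub_mul_inv {R : Type*} [CommRing R] (A B : Matrix d d R)
    (hB : IsUnit B.det) :
    ((A - B) * (A - B) * B⁻¹).trace = (A * A * B⁻¹).trace - 2 * A.trace + B.trace := by
  have hexpand : (A - B) * (A - B) * B⁻¹ =
      A * A * B⁻¹ - A * (B * B⁻¹) - B * A * B⁻¹ + B * (B * B⁻¹) := by noncomm_ring
  rw [hexpand, mul_nonsing_inv B hB, trace_add, trace_sub, trace_sub, trace_mul_cycle B A,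
    nonsing_inv_mul B hB]
  simp only [Matrix.mul_one, Matrix.one_mul]
  ring

end Matrix

lemma Real.mul_log_sub_mul_log_le {a b : ℝ} (ha : 0 ≤ a) (hb : 0 < b) :
    a * Real.log a - a * Real.log b ≤ a * a * b⁻¹ - a := by
  rcases ha.eq_or_lt with rfl | ha
  · simp
  have h := Real.log_le_sub_one_of_pos (div_pos ha hb)
  rw [Real.log_div ha.ne' hb.ne'] at h
  have hmul := mul_le_mul_of_nonneg_left h ha.le
  rw [div_eq_mul_inv] at hmul
  linarith

theorem qRelEnt_le_re_trace_mul_mul_inv_sub {A B : Matrix d d ℂ} (hA : A.PosSemidef)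
    (hB : B.PosDef) :
    qRelEnt A B ≤ (A * A * B⁻¹).trace.re - A.trace.re := by
  have hAh := hA.isHermitian
  have hBh := hB.isHermitian
  have hA_logA :
      A * logm A = cfc (fun x : ℝ => x * Real.log x) A * cfc (fun _ => 1 : ℝ → ℝ) B := by
    rw [hA.logm_eq_cfc_log, cfc_const_one ℝ B, Matrix.mul_one,
      cfc_mul (fun x => x) Real.log A (hg := A.finite_real_spectrum.continuousOn _), cfc_id' ℝ A]
  have hA_logB : A * logm B = cfc (id : ℝ → ℝ) A * cfc Real.log B := by
    rw [hB.posSemidef.logm_eq_cfc_log, cfc_id ℝ A]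
  have hA_sq_inv : A * A * B⁻¹ = cfc (fun x : ℝ => x * x) A * cfc (·⁻¹ : ℝ → ℝ) B := by
    rw [hB.inv_eq_cfc_inv, cfc_mul (fun x => x) (fun x => x) A, cfc_id' ℝ A]
  have hA_tr : A.trace = (cfc (id : ℝ → ℝ) A * cfc (fun _ => 1 : ℝ → ℝ) B).trace := by
    rw [cfc_const_one ℝ B, Matrix.mul_one, cfc_id ℝ A]
  rw [qRelEnt, Matrix.mul_sub, trace_sub, Complex.sub_re, hA_logA, hA_logB, hA_sq_inv, hA_tr]
  simp only [hAh.trace_cfc_mul_cfc hBh, ← RCLike.re_to_complex, RCLike.ofReal_re,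
    ← Finset.sum_sub_distrib, id, mul_one]
  refine Finset.sum_le_sum fun i _ => Finset.sum_le_sum fun j _ => ?_
  simpa only [sub_mul] using mul_le_mul_of_nonneg_right
    (Real.mul_log_sub_mul_log_le (hA.eigenvalues_nonneg i) (hB.eigenvalues_pos j))
    (hAh.eigenOverlap_nonneg hBh i j)

/-- For density matrices `A`, `B` with `B` positive definite,
`D(A‖B) ≤ Tr((A − B)² B⁻¹) = χ²(A‖B)`. -/
theorem qRelEnt_le_chiSq (A B : Matrix d d ℂ)
    (hA : A.PosSemidef) (hA1 : A.trace = 1)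
    (hB : B.PosDef) (hB1 : B.trace = 1) :
    qRelEnt A B ≤ (((A - B) * (A - B) * B⁻¹).trace).re := by
  have hB_det : IsUnit B.det := (isUnit_iff_isUnit_det B).mp hB.isUnit
  calc qRelEnt A B ≤ (A * A * B⁻¹).trace.re - A.trace.re :=
        qRelEnt_le_re_trace_mul_mul_inv_sub hA hB
    _ = (((A - B) * (A - B) * B⁻¹).trace).re := by
        rw [trace_sub_mul_sub_mul_inv A B hB_det, hA1, hB1]
        norm_num
        ring
end

section
/- Let X be a Hermitian matrix with operator norm ‖X‖ < 1 and let r be a real number. Then (I + X)^r = Σ_{i=0}^∞ C(r,i) X^i, where C(r,i) = r(r−1)···(r−i+1)/i! is the generalized binomial coefficient, and the series converges in operator norm. -/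
open Matrix
open scoped ComplexOrder

variable {d : Type*} [Fintype d] [DecidableEq d]

/-!
Diagonalise `1 + X = U diag(ν) U*`. Since `ν k - 1` lies in the spectrum of `X`, it has absolute
value at most `‖X‖ < 1`, so the scalar binomial series `∑ C(r,i) (ν k - 1)^i` converges to
`(ν k)^r`. These series converge entrywise along the diagonal, and conjugating by `U` turns
`diag((ν - 1)^i)` into `X^i` and `diag(ν^r)` into `(1 + X)^r`.
-/

theorem Ring.choose_eq_prod_range_div {R : Type*} [Field R] [CharZero R] (a : R) (n : ℕ) :
    Ring.choose a n = (∏ j ∈ Finset.range n, (a - j)) / n.factorial := by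
  rw [Ring.choose_eq_smul, ← descPochhammer_eval_eq_prod_range, ← Polynomial.aeval_eq_smeval,
    ← Polynomial.eval_map_algebraMap, descPochhammer_map, smul_eq_mul, inv_mul_eq_div]

theorem Real.hasSum_choose_mul_pow (a : ℝ) {x : ℝ} (hx : |x| < 1) :
    HasSum (fun n => Ring.choose a n * x ^ n) ((1 + x) ^ a) := by
  simpa [binomialSeries, FormalMultilinearSeries.ofScalars] using
    Real.one_add_rpow_hasFPowerSeriesOnBall_zero.hasSum
      (y := x) (by simpa [edist_dist, Real.dist_eq] using hx)

open scoped Matrix.Norms.L2Operator in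
theorem Matrix.abs_le_l2_opNorm_of_mem_spectrum {X : Matrix d d ℂ} {μ : ℝ}
    (hμ : μ ∈ spectrum ℝ X) : |μ| ≤ ‖X‖ := by
  -- `NormOneClass` needs `Nonempty d`; over an empty index type every matrix is a unit.
  have : Nonempty d := by
    by_contra hd
    rw [not_nonempty_iff] at hd
    exact hμ ((Matrix.isUnit_iff_isUnit_det _).mpr (by simp))
  simpa using spectrum.norm_le_norm_of_mem hμ

namespace Matrix.IsHermitian

variable {A : Matrix d d ℂ} (hA : A.IsHermitian)
include hA

theorem mfun_eq_conjStarAlgAut (f : ℝ → ℝ) :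
    mfun f A = Unitary.conjStarAlgAut ℂ _ hA.eigenvectorUnitary
      (diagonal fun k => (f (hA.eigenvalues k) : ℂ)) := by
  rw [mfun, dif_pos hA]
  rfl

theorem mfun_mul_sub_pow (c s : ℝ) (i : ℕ) :
    mfun (fun x => c * (x - s) ^ i) A = c • (A - s • 1) ^ i := by
  have hdiag : (diagonal fun k => ((c * (hA.eigenvalues k - s) ^ i : ℝ) : ℂ)) =
      (c : ℂ) • (diagonal (RCLike.ofReal ∘ hA.eigenvalues) - (s : ℂ) • 1) ^ i := by
    rw [← diagonal_one, ← diagonal_smul, diagonal_sub, diagonal_pow, ← diagonal_smul]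
    congr 1
    ext k
    simp
  rw [mfun_eq_conjStarAlgAut hA, hdiag, map_smul, map_pow, map_sub, map_smul, map_one,
    ← hA.spectral_theorem, Complex.coe_smul, Complex.coe_smul]

theorem hasSum_mfun {g : ℕ → ℝ → ℝ} {f : ℝ → ℝ}
    (h : ∀ k, HasSum (fun i => g i (hA.eigenvalues k)) (f (hA.eigenvalues k))) :
    HasSum (fun i => mfun (g i) A) (mfun f A) := by
  simp only [mfun_eq_conjStarAlgAut hA, Unitary.conjStarAlgAut_apply]
  have hdiag := (Pi.hasSum.mpr fun k => Complex.hasSum_ofReal.mpr (h k)).matrix_diagonal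
  exact (hdiag.mul_left _).mul_right _

end Matrix.IsHermitian

open scoped Matrix.Norms.L2Operator in
/-- For a Hermitian matrix `X` with operator norm `‖X‖ < 1` and any real `r`,
`(I + X)^r = Σ_{i=0}^∞ C(r,i) X^i` where `C(r,i) = r(r−1)⋯(r−i+1)/i!` is the generalized
binomial coefficient, the series converging (in norm, equivalently entrywise). -/
theorem binomial_series_posDef_rpow (X : Matrix d d ℂ)
    (hX : X.IsHermitian) (hXnorm : ‖X‖ < 1) (r : ℝ) :
    HasSum
      (fun i : ℕ =>
        ((∏ j ∈ Finset.range i, (r - (j : ℝ))) / (Nat.factorial i : ℝ)) • X ^ i)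
      (powm (1 + X) r) := by
  have hA : (1 + X).IsHermitian := isHermitian_one.add hX
  have hev : ∀ k, |hA.eigenvalues k - 1| < 1 := fun k => by
    have hmem : hA.eigenvalues k - 1 ∈ spectrum ℝ X :=
      (spectrum.add_mem_add_iff (s := 1)).mp (by simpa using hA.eigenvalues_mem_spectrum_real k)
    exact (Matrix.abs_le_l2_opNorm_of_mem_spectrum hmem).trans_lt hXnorm
  have hsum := hA.hasSum_mfun (g := fun i x => Ring.choose r i * (x - 1) ^ i)
    (f := fun x => if x ≤ 0 then 0 else x ^ r) fun k => by
      have hpos : 0 < hA.eigenvalues k := by linarith [(abs_lt.mp (hev k)).1]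
      simpa [if_neg hpos.not_ge] using Real.hasSum_choose_mul_pow r (hev k)
  simpa only [powm, hA.mfun_mul_sub_pow, one_smul, add_sub_cancel_left,
    Ring.choose_eq_prod_range_div] using hsum
end

section
/- In the binary hypothesis test between two equiprobable pure states |ψ⟩ and |φ⟩, the minimum average error probability over all two-outcome POVMs is (1 − √(1 − |⟨ψ|φ⟩|²))/2. -/
open Matrix
open scoped ComplexOrder

variable {d : Type*} [Fintype d] [DecidableEq d]

/-!
The error of `(Π, 1 - Π)` is `(1 - Δ)/2` with bias `Δ = ⟨ψ|Π|ψ⟩ - ⟨φ|Π|φ⟩`. With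
`c = ⟨ψ|φ⟩` and `s = √(1 - |c|²)`, the vectors `V = (1 + s)ψ - c̄φ` and `W = (1 + s)φ - cψ`
satisfy `|V⟩⟨V| - |W⟩⟨W| = 2s(1 + s)(|ψ⟩⟨ψ| - |φ⟩⟨φ|)` and `‖V‖² = ‖W‖² = 2s²(1 + s)`.
Testing `0 ≤ Π ≤ 1` against `V` and `W` gives `2s(1 + s)Δ ≤ ‖V‖²`, i.e. `Δ ≤ s`, and the
projection onto `V` attains `Δ = s`.
-/

open scoped MatrixOrder

section
variable {n : Type*} [Fintype n]

lemma star_dotProduct_vecMulVec_mulVec (V x : n → ℂ) :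
    star x ⬝ᵥ (vecMulVec V (star V) *ᵥ x) = Complex.normSq (star V ⬝ᵥ x) := by
  rw [vecMulVec_mulVec, ← Complex.mul_conj, ← Complex.star_def, ← star_dotProduct]
  simp [dotProduct_smul]

-- Since `0⁻¹ = 0`, this is the zero projection when `V = 0`.
lemma isStarProjection_inv_smul_vecMulVec (V : n → ℂ) :
    IsStarProjection ((star V ⬝ᵥ V)⁻¹ • vecMulVec V (star V)) := by
  refine ⟨?_, ?_⟩
  · rw [IsIdempotentElem, smul_mul_smul_comm, vecMulVec_mul_vecMulVec, vecMulVec_smul, smul_smul]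
    congr 1
    simpa using mul_self_mul_inv (star V ⬝ᵥ V)⁻¹
  · rw [IsSelfAdjoint, star_smul, star_inv₀, ← star_dotProduct, star_eq_conjTranspose,
      conjTranspose_vecMulVec, star_star]

/-- For unit vectors `ψ, φ` and `s = √(1 - |⟨ψ|φ⟩|²)`, an eigenvector of `|ψ⟩⟨ψ| - |φ⟩⟨φ|`
for the eigenvalue `s`; `helstromVec φ ψ s` is one for `-s`. -/
def helstromVec (ψ φ : n → ℂ) (s : ℝ) : n → ℂ :=
  ((1 + s : ℝ) : ℂ) • ψ - star (star ψ ⬝ᵥ φ) • φ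

lemma helstromVec_dotProduct_mulVec_sub_swap (P : Matrix n n ℂ) (ψ φ : n → ℂ) (s : ℝ) :
    star (helstromVec ψ φ s) ⬝ᵥ (P *ᵥ helstromVec ψ φ s)
      - star (helstromVec φ ψ s) ⬝ᵥ (P *ᵥ helstromVec φ ψ s)
      = ((1 + s) ^ 2 - Complex.normSq (star ψ ⬝ᵥ φ) : ℝ)
        * (star ψ ⬝ᵥ (P *ᵥ ψ) - star φ ⬝ᵥ (P *ᵥ φ)) := by
  simp only [helstromVec, star_dotProduct φ ψ, mulVec_sub, mulVec_smul, dotProduct_sub,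
    sub_dotProduct, dotProduct_smul, smul_dotProduct, star_sub, star_smul, smul_eq_mul,
    Complex.star_def, Complex.conj_ofReal, Complex.conj_conj]
  push_cast
  rw [Complex.normSq_eq_conj_mul_self]
  ring

variable {ψ φ : n → ℂ} {s : ℝ}

lemma star_mul_self_of_sq_add_normSq (hs : s ^ 2 + Complex.normSq (star ψ ⬝ᵥ φ) = 1) :
    star (star ψ ⬝ᵥ φ) * (star ψ ⬝ᵥ φ) = 1 - (s : ℂ) ^ 2 := by
  rw [Complex.star_def, ← Complex.normSq_eq_conj_mul_self]
  exact_mod_cast eq_sub_of_add_eq' hs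

lemma star_helstromVec_dotProduct_left (hψ : star ψ ⬝ᵥ ψ = 1)
    (hs : s ^ 2 + Complex.normSq (star ψ ⬝ᵥ φ) = 1) :
    star (helstromVec ψ φ s) ⬝ᵥ ψ = ((s * (1 + s) : ℝ) : ℂ) := by
  have hc := star_mul_self_of_sq_add_normSq hs
  simp only [helstromVec, star_sub, star_smul, sub_dotProduct, smul_dotProduct,
    smul_eq_mul, hψ, star_dotProduct φ ψ, Complex.star_def, Complex.conj_ofReal,
    Complex.conj_conj] at hc ⊢
  push_cast
  linear_combination -hc

lemma star_helstromVec_dotProduct_right (hφ : star φ ⬝ᵥ φ = 1) :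
    star (helstromVec ψ φ s) ⬝ᵥ φ = (s : ℂ) * (star ψ ⬝ᵥ φ) := by
  simp only [helstromVec, star_sub, star_smul, sub_dotProduct, smul_dotProduct,
    smul_eq_mul, hφ, Complex.star_def, Complex.conj_ofReal, Complex.conj_conj]
  push_cast
  ring

lemma star_helstromVec_dotProduct_self (hψ : star ψ ⬝ᵥ ψ = 1) (hφ : star φ ⬝ᵥ φ = 1)
    (hs : s ^ 2 + Complex.normSq (star ψ ⬝ᵥ φ) = 1) :
    star (helstromVec ψ φ s) ⬝ᵥ helstromVec ψ φ s = ((2 * s ^ 2 * (1 + s) : ℝ) : ℂ) := by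
  have hc := star_mul_self_of_sq_add_normSq hs
  conv_lhs => arg 2; rw [helstromVec]
  rw [dotProduct_sub, dotProduct_smul, dotProduct_smul, star_helstromVec_dotProduct_left hψ hs,
    star_helstromVec_dotProduct_right hφ, smul_eq_mul, smul_eq_mul]
  push_cast
  linear_combination (-(s : ℂ)) * hc

variable [DecidableEq n]

lemma re_dotProduct_mulVec_sub_le {P : Matrix n n ℂ} (hP : P.PosSemidef)
    (hQ : (1 - P).PosSemidef) (hψ : star ψ ⬝ᵥ ψ = 1) (hφ : star φ ⬝ᵥ φ = 1)
    (hs : s ^ 2 + Complex.normSq (star ψ ⬝ᵥ φ) = 1) (hs0 : 0 ≤ s) :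
    (star ψ ⬝ᵥ (P *ᵥ ψ)).re - (star φ ⬝ᵥ (P *ᵥ φ)).re ≤ s := by
  rcases hs0.eq_or_lt with rfl | hpos
  · -- `helstromVec φ ψ 0` has norm `0`, so `φ` is a multiple of `ψ`.
    have hs' : 0 ^ 2 + Complex.normSq (star φ ⬝ᵥ ψ) = 1 := by
      rwa [star_dotProduct φ ψ, Complex.star_def, Complex.normSq_conj]
    have hφψ : φ = (star ψ ⬝ᵥ φ) • ψ := by
      have hW : helstromVec φ ψ 0 = 0 := by
        simpa using star_helstromVec_dotProduct_self hφ hψ hs'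
      rwa [helstromVec, ← star_dotProduct, add_zero, Complex.ofReal_one, one_smul,
        sub_eq_zero] at hW
    have hc : Complex.normSq (star ψ ⬝ᵥ φ) = 1 := by simpa using hs
    rw [hφψ, star_smul, mulVec_smul, dotProduct_smul, smul_dotProduct, smul_smul, smul_eq_mul,
      Complex.star_def, Complex.mul_conj, hc]
    simp
  · have key := congrArg Complex.re (helstromVec_dotProduct_mulVec_sub_swap P ψ φ s)
    have hV : 0 ≤ (star (helstromVec ψ φ s) ⬝ᵥ ((1 - P) *ᵥ helstromVec ψ φ s)).re :=
      hQ.re_dotProduct_nonneg _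
    have hW : 0 ≤ (star (helstromVec φ ψ s) ⬝ᵥ (P *ᵥ helstromVec φ ψ s)).re :=
      hP.re_dotProduct_nonneg _
    rw [sub_mulVec, one_mulVec, dotProduct_sub, Complex.sub_re,
      star_helstromVec_dotProduct_self hψ hφ hs, Complex.ofReal_re] at hV
    rw [Complex.sub_re, Complex.re_ofReal_mul, Complex.sub_re, eq_sub_of_add_eq' hs] at key
    nlinarith

lemma exists_re_dotProduct_mulVec_sub_eq (hψ : star ψ ⬝ᵥ ψ = 1) (hφ : star φ ⬝ᵥ φ = 1)
    (hs : s ^ 2 + Complex.normSq (star ψ ⬝ᵥ φ) = 1) (hs0 : 0 ≤ s) :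
    ∃ P : Matrix n n ℂ, P.PosSemidef ∧ (1 - P).PosSemidef ∧
      (star ψ ⬝ᵥ (P *ᵥ ψ)).re - (star φ ⬝ᵥ (P *ᵥ φ)).re = s := by
  have hproj := isStarProjection_inv_smul_vecMulVec (helstromVec ψ φ s)
  refine ⟨_, hproj.nonneg.posSemidef, hproj.one_sub.nonneg.posSemidef, ?_⟩
  simp only [smul_mulVec, dotProduct_smul, star_dotProduct_vecMulVec_mulVec,
    star_helstromVec_dotProduct_self hψ hφ hs, star_helstromVec_dotProduct_left hψ hs,
    star_helstromVec_dotProduct_right hφ, smul_eq_mul, ← Complex.ofReal_inv,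
    Complex.re_ofReal_mul, Complex.ofReal_re, Complex.normSq_mul, Complex.normSq_ofReal]
  rcases hs0.eq_or_lt with rfl | hpos
  · simp
  · field_simp
    linear_combination -hs

end

/-- Helstrom bound for equiprobable pure states. The minimum average error
probability over all two-outcome POVMs `(Π, I−Π)` for distinguishing equiprobable pure
states `ψ` and `φ` is `(1 − √(1 − |⟨ψ|φ⟩|²))/2`, where the average error probability of
`(Π, I−Π)` is `(1/2)(1 − ⟨ψ|Π|ψ⟩) + (1/2)⟨φ|Π|φ⟩`. -/
theorem helstrom_pure_states (ψ φ : EuclideanSpace ℂ d)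
    (hψ : ‖ψ‖ = 1) (hφ : ‖φ‖ = 1) :
    IsLeast
      { e : ℝ | ∃ P : Matrix d d ℂ, P.PosSemidef ∧ (1 - P).PosSemidef ∧
          e = (1 / 2) * (1 - (dotProduct (fun i => star (ψ i))
                  (P.mulVec fun i => ψ i)).re)
            + (1 / 2) * (dotProduct (fun i => star (φ i))
                  (P.mulVec fun i => φ i)).re }
      ((1 - Real.sqrt (1 - ‖(inner ℂ ψ φ : ℂ)‖ ^ 2)) / 2) := by
  have hinner (x y : EuclideanSpace ℂ d) : inner ℂ x y = star x.ofLp ⬝ᵥ y.ofLp := by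
    rw [EuclideanSpace.inner_eq_star_dotProduct, dotProduct_comm]
  have hunit {x : EuclideanSpace ℂ d} (hx : ‖x‖ = 1) : star x.ofLp ⬝ᵥ x.ofLp = 1 := by
    rw [← hinner, inner_self_eq_norm_sq_to_K, hx]
    simp
  have hcs : ‖(inner ℂ ψ φ : ℂ)‖ ≤ 1 := by
    simpa [hψ, hφ] using norm_inner_le_norm (𝕜 := ℂ) ψ φ
  have hs : √(1 - ‖(inner ℂ ψ φ : ℂ)‖ ^ 2) ^ 2 + Complex.normSq (star ψ.ofLp ⬝ᵥ φ.ofLp) = 1 := by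
    rw [Real.sq_sqrt (by nlinarith [norm_nonneg (inner ℂ ψ φ)]), ← hinner,
      Complex.normSq_eq_norm_sq]
    ring
  have hform (x : EuclideanSpace ℂ d) (P : Matrix d d ℂ) :
      (fun i => star (x i)) ⬝ᵥ (P *ᵥ fun i => x i) = star x.ofLp ⬝ᵥ (P *ᵥ x.ofLp) := rfl
  simp only [hform]
  refine ⟨?_, ?_⟩
  · obtain ⟨P, hP, hQ, hbias⟩ :=
      exists_re_dotProduct_mulVec_sub_eq (hunit hψ) (hunit hφ) hs (Real.sqrt_nonneg _)
    exact ⟨P, hP, hQ, by linarith⟩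
  · rintro _ ⟨P, hP, hQ, rfl⟩
    have := re_dotProduct_mulVec_sub_le hP hQ (hunit hψ) (hunit hφ) hs (Real.sqrt_nonneg _)
    linarith
end
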